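/- Let λ ∈ Γ_k^+ with S_k(λ)/S_l(λ) = C(n,k)/C(n,l), 0 ≤ l < k ≤ n. Define M := C(n,l)(n−k)S_k(λ) − C(n,k)(n−l)S_l(λ) and Q := C(n,l)(k+1)S_{k+1}(λ) − C(n,k)(l+1)S_{l+1}(λ). Then M < 0 and M − Q ≥ 0. -/

import Mathlib

/-!
Newton's inequalities say that the means `E_i = S_i / C(n,i)` form a log-concave sequence. By
Rolle's theorem, differentiating `∏ (X + λ_i)` removes one variable without changing the means,
so it suffices to treat `j + 2` variables; there, passing to the reciprocals of the `λ_i` turns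
`E_j E_{j+2} ≤ E_{j+1}^2` into `E_0 E_2 ≤ E_1^2`, which after a second reduction to two variables
is the AM-GM inequality.

A positive log-concave sequence that decreases at some step keeps strictly decreasing. Since
`E_l = E_k` with `l < k`, it therefore cannot decrease right after `l` nor increase right before
`k`: `E_l ≤ E_{l+1}` and `E_{k+1} ≤ E_k ≤ E_{k-1}`. These are the bounds
`(n - l) S_l ≤ (l + 1) S_{l+1}` and `(k + 1) S_{k+1} ≤ (n - k) S_k`, and `M < 0`, `M - Q ≥ 0`
are linear consequences of them and of the hypothesis.
-/

/-- `S_k(λ)`: the `k`-th elementary symmetric polynomial of `λ ∈ ℝ^n` (with `S_0 = 1`). -/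
def Sv {n : ℕ} (k : ℕ) (lam : Fin n → ℝ) : ℝ :=
  ∑ s ∈ Finset.univ.powersetCard k, ∏ i ∈ s, lam i

open Polynomial

theorem Finset.sum_powersetCard_card_sub_prod {ι K : Type*} [Fintype ι] [DecidableEq ι] [Field K]
    {f : ι → K} (hf : ∀ i, f i ≠ 0) {r : ℕ} (hr : r ≤ Fintype.card ι) :
    ∑ u ∈ univ.powersetCard (Fintype.card ι - r), ∏ i ∈ u, f i
      = (∏ i, f i) * ∑ u ∈ univ.powersetCard r, ∏ i ∈ u, (f i)⁻¹ := by
  rw [mul_sum]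
  refine sum_nbij' (fun u => uᶜ) (fun u => uᶜ) ?_ ?_ (fun u _ => compl_compl u)
    (fun u _ => compl_compl u) fun u _ => ?_
  · intro u hu
    rw [mem_powersetCard_univ] at hu ⊢
    rw [card_compl, hu]
    omega
  · intro u hu
    rw [mem_powersetCard_univ] at hu ⊢
    rw [card_compl, hu]
  · rw [prod_inv_distrib, ← prod_mul_prod_compl uᶜ f, compl_compl, mul_comm (∏ i ∈ uᶜ, f i),
      mul_inv_cancel_right₀ (prod_ne_zero_iff.2 fun i _ => hf i)]

theorem Multiset.esymm_card_sub {K : Type*} [Field K] {s : Multiset K} (hs : (0 : K) ∉ s) {r : ℕ}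
    (hr : r ≤ card s) : s.esymm (card s - r) = s.prod * (s.map (·⁻¹)).esymm r := by
  classical
  set f : s → K := fun x => x
  have hf : ∀ x, f x ≠ 0 := fun x h => hs (h ▸ coe_mem)
  have hsf : s = Finset.univ.val.map f := (map_univ_coe s).symm
  have hsinv : s.map (·⁻¹) = Finset.univ.val.map fun x => (f x)⁻¹ := (map_univ_comp_coe s _).symm
  have hcard : card s = Fintype.card s := (card_coe s).symm
  have hprod : s.prod = ∏ x, f x := by rw [Finset.prod_eq_multiset_prod, ← hsf]
  rw [hsinv, Finset.esymm_map_val, hcard, hprod,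
    ← Finset.sum_powersetCard_card_sub_prod hf (hcard ▸ hr), ← Finset.esymm_map_val, ← hsf]

namespace Multiset

noncomputable def esymmMean (s : Multiset ℝ) (r : ℕ) : ℝ := s.esymm r / (card s).choose r

theorem esymmMean_eq_zero_of_card_lt {s : Multiset ℝ} {r : ℕ} (h : card s < r) :
    s.esymmMean r = 0 := by
  rw [esymmMean, Nat.choose_eq_zero_of_lt h, Nat.cast_zero, div_zero]

theorem esymmMean_zero (s : Multiset ℝ) : s.esymmMean 0 = 1 := by
  simp [esymmMean, esymm, powersetCard_zero_left]

theorem esymm_card {R : Type*} [CommSemiring R] (s : Multiset R) : s.esymm (card s) = s.prod := by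
  simp [esymm, powersetCard_self]

theorem esymmMean_card (s : Multiset ℝ) : s.esymmMean (card s) = s.prod := by
  rw [esymmMean, esymm_card, Nat.choose_self, Nat.cast_one, div_one]

theorem exists_esymmMean_eq_of_card_eq_succ {s : Multiset ℝ} {n : ℕ} (hs : card s = n + 1) :
    ∃ t : Multiset ℝ, card t = n ∧ ∀ r ≤ n, t.esymmMean r = s.esymmMean r := by
  set P : ℝ[X] := ((s.map Neg.neg).map fun a => X - C a).prod
  have hProots : P.roots = s.map Neg.neg := roots_multiset_prod_X_sub_C _
  have hPdeg : P.natDegree = n + 1 := by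
    rw [natDegree_multiset_prod_X_sub_C_eq_card, card_map, hs]
  have hPcoeff : ∀ i ≤ n + 1, P.coeff i = s.esymm (n + 1 - i) := by
    intro i hi
    rw [prod_X_sub_C_coeff _ (by simpa [hs] using hi), card_map, hs, esymm_neg, ← mul_assoc,
      ← mul_pow]
    simp
  set D := derivative P
  have hDdeg_le : D.natDegree ≤ n := by
    have : D.natDegree ≤ P.natDegree - 1 := natDegree_derivative_le P
    omega
  -- Rolle's theorem: between consecutive roots of `P` lies a root of `P'`
  have hDroots : n ≤ card D.roots := by
    have : card P.roots ≤ card D.roots + 1 := P.card_roots_le_derivative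
    rw [hProots, card_map, hs] at this
    omega
  have hDcard : card D.roots = D.natDegree :=
    le_antisymm (card_roots' D) (hDdeg_le.trans hDroots)
  have hDdeg : D.natDegree = n := le_antisymm hDdeg_le (hDcard ▸ hDroots)
  refine ⟨D.roots.map Neg.neg, by rw [card_map, hDcard, hDdeg], fun r hr => ?_⟩
  have hvieta := coeff_eq_esymm_roots_of_card hDcard (k := n - r) (by omega)
  have hlead : D.leadingCoeff = n + 1 := by
    rw [leadingCoeff, hDdeg, coeff_derivative, hPcoeff _ le_rfl]
    simp [esymm, powersetCard_zero_left]
  rw [hlead, hDdeg, Nat.sub_sub_self hr, coeff_derivative, hPcoeff _ (by omega),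
    show n + 1 - (n - r + 1) = r by omega] at hvieta
  have hchoose := congrArg (Nat.cast (R := ℝ)) (Nat.choose_mul_succ_eq n r)
  push_cast [Nat.cast_sub hr, Nat.cast_sub (hr.trans n.le_succ)] at hvieta hchoose
  have hpos : (0 : ℝ) < n.choose r := mod_cast Nat.choose_pos hr
  have hpos' : (0 : ℝ) < (n + 1).choose r := mod_cast Nat.choose_pos (hr.trans n.le_succ)
  rw [esymmMean, esymmMean, card_map, hDcard, hDdeg, hs, esymm_neg,
    div_eq_div_iff hpos.ne' hpos'.ne']
  refine mul_left_cancel₀ (n.cast_add_one_pos (α := ℝ)).ne' ?_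
  linear_combination -((n + 1).choose r : ℝ) * hvieta - s.esymm r * hchoose

theorem exists_esymmMean_eq {s : Multiset ℝ} {m : ℕ} (hm : m ≤ card s) :
    ∃ t : Multiset ℝ, card t = m ∧ ∀ r ≤ m, t.esymmMean r = s.esymmMean r := by
  induction hm using Nat.decreasingInduction with
  | self => exact ⟨s, rfl, fun _ _ => rfl⟩
  | of_succ m _ ih =>
    obtain ⟨t, ht, hts⟩ := ih
    obtain ⟨u, hu, hut⟩ := exists_esymmMean_eq_of_card_eq_succ ht
    exact ⟨u, hu, fun r hr => (hut r hr).trans (hts r (by omega))⟩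

theorem esymmMean_zero_mul_esymmMean_two_le (s : Multiset ℝ) :
    s.esymmMean 0 * s.esymmMean 2 ≤ s.esymmMean 1 ^ 2 := by
  rcases lt_or_ge (card s) 2 with hs | hs
  · rw [esymmMean_eq_zero_of_card_lt hs, mul_zero]
    positivity
  obtain ⟨t, ht, hts⟩ := exists_esymmMean_eq hs
  obtain ⟨a, b, rfl⟩ := card_eq_two.1 ht
  rw [← hts 0 (by norm_num), ← hts 1 (by norm_num), ← hts 2 le_rfl, esymmMean_zero, esymmMean,
    esymmMean, ht, insert_eq_cons, esymm_pair_one, esymm_pair_two]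
  norm_num
  nlinarith [sq_nonneg (a - b)]

theorem esymmMean_card_sub {s : Multiset ℝ} (hs : (0 : ℝ) ∉ s) {r : ℕ} (hr : r ≤ card s) :
    s.esymmMean (card s - r) = s.prod * (s.map (·⁻¹)).esymmMean r := by
  rw [esymmMean, esymmMean, esymm_card_sub hs hr, card_map, Nat.choose_symm hr, mul_div_assoc]

theorem esymmMean_mul_esymmMean_le_sq (s : Multiset ℝ) (j : ℕ) :
    s.esymmMean j * s.esymmMean (j + 2) ≤ s.esymmMean (j + 1) ^ 2 := by
  rcases lt_or_ge (card s) (j + 2) with hs | hs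
  · rw [esymmMean_eq_zero_of_card_lt hs, mul_zero]
    positivity
  obtain ⟨t, ht, hts⟩ := exists_esymmMean_eq hs
  rw [← hts j (by omega), ← hts (j + 1) (by omega), ← hts (j + 2) le_rfl]
  by_cases h0 : (0 : ℝ) ∈ t
  · rw [← ht, esymmMean_card, prod_eq_zero h0, mul_zero]
    positivity
  set u := t.map (·⁻¹)
  have hmirror : ∀ i r, i + r = j + 2 → t.esymmMean i = t.prod * u.esymmMean r := by
    intro i r hir
    rw [show i = card t - r by omega]
    exact esymmMean_card_sub h0 (by omega)
  rw [hmirror j 2 rfl, hmirror (j + 1) 1 rfl, hmirror (j + 2) 0 rfl]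
  calc t.prod * u.esymmMean 2 * (t.prod * u.esymmMean 0)
      = t.prod ^ 2 * (u.esymmMean 0 * u.esymmMean 2) := by ring
    _ ≤ t.prod ^ 2 * u.esymmMean 1 ^ 2 := by
      gcongr
      exact esymmMean_zero_mul_esymmMean_two_le u
    _ = (t.prod * u.esymmMean 1) ^ 2 := by ring

end Multiset

section LogConcave

variable {p : ℕ → ℝ} {k : ℕ}

theorem lt_of_logConcave_of_succ_lt (hpos : ∀ i ≤ k, 0 < p i)
    (hlc : ∀ j, j + 2 ≤ k → p j * p (j + 2) ≤ p (j + 1) ^ 2) {a : ℕ} (hak : a < k)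
    (hdrop : p (a + 1) < p a) : p k < p a := by
  have hstep : ∀ j, a ≤ j → j < k → p (j + 1) < p j ∧ p (j + 1) < p a := by
    intro j haj
    induction j, haj using Nat.le_induction with
    | base => exact fun _ => ⟨hdrop, hdrop⟩
    | succ j _ ih =>
      intro hjk
      obtain ⟨hj, hja⟩ := ih (by omega)
      have hlt : p j * p (j + 2) < p j * p (j + 1) := by
        calc p j * p (j + 2) ≤ p (j + 1) * p (j + 1) := (sq (p (j + 1))) ▸ hlc j (by omega)
          _ < p j * p (j + 1) := mul_lt_mul_of_pos_right hj (hpos _ (by omega))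
      have hj2 := lt_of_mul_lt_mul_left hlt (hpos j (by omega)).le
      exact ⟨hj2, hj2.trans hja⟩
  obtain ⟨m, rfl⟩ : ∃ m, k = m + 1 := ⟨k - 1, by omega⟩
  exact (hstep m (by omega) (by omega)).2

theorem le_succ_of_logConcave_of_eq (hpos : ∀ i ≤ k, 0 < p i)
    (hlc : ∀ j, j + 2 ≤ k → p j * p (j + 2) ≤ p (j + 1) ^ 2) {l : ℕ} (hlk : l < k)
    (heq : p k = p l) : p l ≤ p (l + 1) :=
  not_lt.1 fun h => (lt_of_logConcave_of_succ_lt hpos hlc hlk h).ne heq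

-- Read backwards, `p` is still log-concave: apply `le_succ_of_logConcave_of_eq` to
-- `i ↦ p (k + 1 - i)` between `0` and `k + 1 - l`.
theorem le_pred_of_logConcave_of_eq (hpos : ∀ i ≤ k + 1, 0 < p i)
    (hlc : ∀ j, j + 2 ≤ k + 1 → p j * p (j + 2) ≤ p (j + 1) ^ 2) {l : ℕ} (hlk : l ≤ k)
    (heq : p (k + 1) = p l) : p (k + 1) ≤ p k := by
  have hends : p (k + 1 - (k + 1 - l)) = p (k + 1 - 0) := by
    rw [Nat.sub_sub_self (by omega), Nat.sub_zero, heq]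
  have hrev := le_succ_of_logConcave_of_eq (p := fun i => p (k + 1 - i)) (k := k + 1 - l)
    (fun i _ => hpos _ (by omega)) (fun j hj => ?_) (by omega) hends
  · simpa using hrev
  · obtain ⟨i, hi⟩ : ∃ i, k + 1 - (j + 2) = i := ⟨_, rfl⟩
    rw [show k + 1 - j = i + 2 by omega, show k + 1 - (j + 1) = i + 1 by omega, hi, mul_comm]
    exact hlc i (by omega)

end LogConcave

section ElementarySymmetric

variable {n : ℕ} (lam : Fin n → ℝ)

theorem Sv_zero : Sv 0 lam = 1 := by
  simp [Sv]

theorem Sv_eq_zero_of_lt {k : ℕ} (h : n < k) : Sv k lam = 0 := by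
  rw [Sv, Finset.powersetCard_eq_empty.2 (by simpa using h), Finset.sum_empty]

theorem Sv_div_choose (k : ℕ) :
    Sv k lam / n.choose k = (Finset.univ.val.map lam).esymmMean k := by
  rw [Multiset.esymmMean, Finset.esymm_map_val, Multiset.card_map, Finset.card_val,
    Finset.card_univ, Fintype.card_fin, Sv]

theorem Sv_div_choose_mul_le_sq (j : ℕ) :
    Sv j lam / n.choose j * (Sv (j + 2) lam / n.choose (j + 2))
      ≤ (Sv (j + 1) lam / n.choose (j + 1)) ^ 2 := by
  simp only [Sv_div_choose]
  exact Multiset.esymmMean_mul_esymmMean_le_sq _ j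

theorem succ_mul_Sv_succ_sub {i : ℕ} (hi : i ≤ n) :
    (i + 1) * Sv (i + 1) lam - (n - i) * Sv i lam
      = (n - i) * n.choose i * (Sv (i + 1) lam / n.choose (i + 1) - Sv i lam / n.choose i) := by
  have hci : (0 : ℝ) < n.choose i := mod_cast Nat.choose_pos hi
  rcases hi.lt_or_eq with hi | rfl
  · have hci' : (0 : ℝ) < n.choose (i + 1) := mod_cast Nat.choose_pos hi
    have hchoose := congrArg (Nat.cast (R := ℝ)) (Nat.choose_succ_right_eq n i)
    push_cast [Nat.cast_sub hi.le] at hchoose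
    field_simp
    linear_combination (Sv (i + 1) lam) * hchoose
  · simp [Sv_eq_zero_of_lt lam (Nat.lt_succ_self i)]

variable {lam} {k l : ℕ}

theorem sub_mul_Sv_le_succ_mul_Sv_succ (hpos : ∀ i ≤ k, 0 < Sv i lam) (hlk : l < k) (hkn : k ≤ n)
    (heq : Sv k lam / n.choose k = Sv l lam / n.choose l) :
    (n - l) * Sv l lam ≤ (l + 1) * Sv (l + 1) lam := by
  have hmean : Sv l lam / n.choose l ≤ Sv (l + 1) lam / n.choose (l + 1) :=
    le_succ_of_logConcave_of_eq (p := fun i => Sv i lam / n.choose i)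
      (fun i hi => div_pos (hpos i hi) (mod_cast Nat.choose_pos (hi.trans hkn)))
      (fun j _ => Sv_div_choose_mul_le_sq lam j) hlk heq
  have hln : (l : ℝ) ≤ n := mod_cast (hlk.trans_le hkn).le
  rw [← sub_nonneg, succ_mul_Sv_succ_sub lam (hlk.trans_le hkn).le]
  exact mul_nonneg (mul_nonneg (sub_nonneg.2 hln) (Nat.cast_nonneg _)) (sub_nonneg.2 hmean)

theorem succ_mul_Sv_succ_le_sub_mul_Sv (hpos : ∀ i ≤ k, 0 < Sv i lam) (hlk : l < k) (hkn : k ≤ n)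
    (heq : Sv k lam / n.choose k = Sv l lam / n.choose l) :
    (k + 1) * Sv (k + 1) lam ≤ (n - k) * Sv k lam := by
  set p : ℕ → ℝ := fun i => Sv i lam / n.choose i
  have hppos : ∀ i ≤ k, 0 < p i :=
    fun i hi => div_pos (hpos i hi) (mod_cast Nat.choose_pos (hi.trans hkn))
  have hlc : ∀ j, p j * p (j + 2) ≤ p (j + 1) ^ 2 := Sv_div_choose_mul_le_sq lam
  have hmean : p (k + 1) ≤ p k := by
    obtain ⟨m, rfl⟩ : ∃ m, k = m + 1 := ⟨k - 1, by omega⟩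
    have hdown : p (m + 1) ≤ p m :=
      le_pred_of_logConcave_of_eq hppos (fun j _ => hlc j) (by omega) heq
    have hstep : p m * p (m + 2) ≤ p m * p (m + 1) :=
      calc p m * p (m + 2) ≤ p (m + 1) * p (m + 1) := sq (p (m + 1)) ▸ hlc m
        _ ≤ p m * p (m + 1) := mul_le_mul_of_nonneg_right hdown (hppos _ le_rfl).le
    exact le_of_mul_le_mul_left hstep (hppos m (by omega))
  have hkn' : (k : ℝ) ≤ n := mod_cast hkn
  rw [← sub_nonpos, succ_mul_Sv_succ_sub lam hkn]
  exact mul_nonpos_of_nonneg_of_nonpos (mul_nonneg (sub_nonneg.2 hkn') (Nat.cast_nonneg _))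
    (sub_nonpos.2 hmean)

end ElementarySymmetric

/-- Under `S_k/S_l = C(n,k)/C(n,l)` on the Garding cone, with
`M = C(n,l)(n−k)S_k − C(n,k)(n−l)S_l` and
`Q = C(n,l)(k+1)S_{k+1} − C(n,k)(l+1)S_{l+1}`, one has `M < 0` and `M − Q ≥ 0`. -/
theorem stmt_16 {n : ℕ} (k l : ℕ) (lam : Fin n → ℝ)
    (hGamma : ∀ i, 1 ≤ i → i ≤ k → 0 < Sv i lam)
    (hlk : l < k) (hkn : k ≤ n)
    (hquot : Sv k lam / Sv l lam = (n.choose k : ℝ) / (n.choose l : ℝ)) :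
    (n.choose l : ℝ) * ((n : ℝ) - (k : ℝ)) * Sv k lam
        - (n.choose k : ℝ) * ((n : ℝ) - (l : ℝ)) * Sv l lam < 0
    ∧ ((n.choose l : ℝ) * ((n : ℝ) - (k : ℝ)) * Sv k lam
          - (n.choose k : ℝ) * ((n : ℝ) - (l : ℝ)) * Sv l lam)
        - ((n.choose l : ℝ) * ((k : ℝ) + 1) * Sv (k + 1) lam
          - (n.choose k : ℝ) * ((l : ℝ) + 1) * Sv (l + 1) lam) ≥ 0 := by
  have hpos : ∀ i ≤ k, 0 < Sv i lam := fun i hi => by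
    rcases i.eq_zero_or_pos with rfl | hi0
    · simp [Sv_zero]
    · exact hGamma i hi0 hi
  have hck : (0 : ℝ) < n.choose k := mod_cast Nat.choose_pos hkn
  have hcl : (0 : ℝ) < n.choose l := mod_cast Nat.choose_pos (hlk.le.trans hkn)
  have hcross : Sv k lam * n.choose l = n.choose k * Sv l lam := by
    rwa [div_eq_div_iff (hpos l hlk.le).ne' hcl.ne'] at hquot
  have heq : Sv k lam / n.choose k = Sv l lam / n.choose l := by
    rw [div_eq_div_iff hck.ne' hcl.ne']
    linear_combination hcross
  have hupper := succ_mul_Sv_succ_le_sub_mul_Sv hpos hlk hkn heq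
  have hlower := sub_mul_Sv_le_succ_mul_Sv_succ hpos hlk hkn heq
  have hkl : (l : ℝ) < k := mod_cast hlk
  constructor
  · -- by the hypothesis, `M = C(n,k) S_l (l - k)`
    nlinarith [mul_pos hck (hpos l hlk.le)]
  · nlinarith [mul_le_mul_of_nonneg_left hupper hcl.le, mul_le_mul_of_nonneg_left hlower hck.le]
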